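/- arXiv:1207.5969 — 2 statements merged into one kernel-verified Lean document; each statement's English description precedes it below -/
import Mathlib

section
/- Let Q ⊂ ℝ^{n-1} be a compact convex polytope with nonempty interior, fix x₀ in the interior of Q, and let v : Q → ℝ be a continuous convex function, differentiable in the interior, with v ≥ 0, v(x₀) = 0, and ∫_{∂Q} v dσ ≤ C₁. Then for every ε > 0 there exists a constant C depending only on ε, C₁ and Q such that v(x) ≤ C for every x in Q whose distance to ∂Q is at least ε. -/
/-!
Let `x` be at distance at least `ε` from `∂Q`. As `v` is convex and differentiable at `x`,
`v ≥ v x` on the half-space `{z | 0 ≤ ⟪ν, z - x⟫}` where `ν` is the gradient of `v` at `x`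
(any `ν ≠ 0` if the gradient vanishes). Following the rays in direction `ν` from the points of
the `ε`-disc through `x` orthogonal to `ν`, and projecting back orthogonally, shows that the part
of `∂Q` in this half-space has `μH[n]`-measure at least `c = μH[n] (ball 0 ε)` of `ℝⁿ`, where
`n + 1` is the dimension. Markov's inequality gives `v x * c ≤ ∫_{∂Q} v ≤ C₁`.

The integral is a genuine one because `μH[n] (∂Q) < ∞`: the nearest-point projection onto `Q`
is `1`-Lipschitz and maps the boundary of a large cube onto `∂Q`.
-/

open Set MeasureTheory Metric Module Filter
open scoped RealInnerProductSpace

lemma IsCompact.mul_measureReal_le_setIntegral {X : Type*} [TopologicalSpace X] [T2Space X]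
    [MeasurableSpace X] [OpensMeasurableSpace X] {μ : Measure X} {K t : Set X} {f : X → ℝ}
    {a : ℝ} (hK : IsCompact K) (hμK : μ K ≠ ⊤) (hf : ContinuousOn f K)
    (hf0 : ∀ z ∈ K, 0 ≤ f z) (ht : MeasurableSet t) (htK : t ⊆ K) (ha : ∀ z ∈ t, a ≤ f z) :
    a * μ.real t ≤ ∫ z in K, f z ∂μ := by
  have hint : IntegrableOn f K μ :=
    hf.integrableOn_of_subset_isCompact hK hK.measurableSet subset_rfl hμK
  calc a * μ.real t ≤ ∫ z in t, f z ∂μ :=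
        setIntegral_ge_of_const_le_real ht (measure_ne_top_of_subset htK hμK) ha
          (hint.mono_set htK)
    _ ≤ ∫ z in K, f z ∂μ :=
        setIntegral_mono_set hint
          ((ae_restrict_iff' hK.measurableSet).2 (Eventually.of_forall hf0))
          (Eventually.of_forall htK)

section InnerProductSpace

variable {E : Type*} [NormedAddCommGroup E] [InnerProductSpace ℝ E]

lemma ConvexOn.add_apply_sub_le_of_hasFDerivAt {s : Set E} {v : E → ℝ} {f : E →L[ℝ] ℝ}
    {x z : E} (hv : ConvexOn ℝ s v) (hx : x ∈ s) (hz : z ∈ s) (hf : HasFDerivAt v f x) :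
    v x + f (z - x) ≤ v z := by
  set line : ℝ →ᵃ[ℝ] E := AffineMap.lineMap x z
  have hline : ⇑line = fun t : ℝ => x + t • (z - x) := by
    ext t
    simp [line, AffineMap.lineMap_apply, add_comm]
  have hderiv : HasDerivAt (v ∘ line) (f (z - x)) 0 := by
    have hl : HasDerivAt line (z - x) 0 := by
      simpa [hline] using ((hasDerivAt_id (0 : ℝ)).smul_const (z - x)).const_add x
    exact (by simpa [hline] using hf : HasFDerivAt v f (line 0)).comp_hasDerivAt 0 hl
  have hslope := (hv.comp_affineMap line).le_slope_of_hasDerivAt (by simpa [hline] using hx)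
    (by simpa [hline] using hz) zero_lt_one hderiv
  simp only [slope, Function.comp_apply, hline, sub_zero, inv_one, one_smul, zero_smul,
    add_zero, add_sub_cancel, vsub_eq_sub] at hslope
  linarith

lemma ConvexOn.exists_ne_zero_le_of_inner_nonneg [CompleteSpace E] [Nontrivial E] {s : Set E}
    {v : E → ℝ} {x : E} (hv : ConvexOn ℝ s v) (hx : x ∈ s) (hd : DifferentiableAt ℝ v x) :
    ∃ ν ≠ 0, ∀ z ∈ s, 0 ≤ ⟪ν, z - x⟫ → v x ≤ v z := by
  by_cases hf : fderiv ℝ v x = 0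
  · obtain ⟨ν, hν⟩ := exists_ne (0 : E)
    refine ⟨ν, hν, fun z hz _ => ?_⟩
    simpa [hf] using hv.add_apply_sub_le_of_hasFDerivAt hx hz hd.hasFDerivAt
  · refine ⟨(InnerProductSpace.toDual ℝ E).symm (fderiv ℝ v x), by simpa using hf,
      fun z hz hνz => ?_⟩
    rw [InnerProductSpace.toDual_symm_apply] at hνz
    linarith [hv.add_apply_sub_le_of_hasFDerivAt hx hz hd.hasFDerivAt]

lemma Convex.exists_ne_zero_inner_sub_nonpos [CompleteSpace E] {Q : Set E} (hQ : Convex ℝ Q)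
    (hQint : (interior Q).Nonempty) {q : E} (hq : q ∈ frontier Q) :
    ∃ ν ≠ 0, ∀ w ∈ Q, ⟪ν, w - q⟫ ≤ 0 := by
  obtain ⟨f, hf⟩ := geometric_hahn_banach_open_point hQ.interior isOpen_interior hq.2
  have hle : ∀ w ∈ Q, f w ≤ f q := by
    have : closure (interior Q) ⊆ {w | f w ≤ f q} :=
      closure_minimal (fun a ha => (hf a ha).le) (isClosed_le f.continuous continuous_const)
    rw [hQ.closure_interior_eq_closure_of_nonempty_interior hQint] at this
    exact fun w hw => this (subset_closure hw)
  obtain ⟨a, ha⟩ := hQint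
  refine ⟨(InnerProductSpace.toDual ℝ E).symm f, fun h0 => ?_, fun w hw => ?_⟩
  · have := hf a ha
    simp_all
  · rw [InnerProductSpace.toDual_symm_apply, map_sub]
    linarith [hle w hw]

lemma norm_sub_le_of_inner_sub_nonpos {y y' p p' : E} (h : ⟪y - p, p' - p⟫ ≤ 0)
    (h' : ⟪y' - p', p - p'⟫ ≤ 0) : ‖p - p'‖ ≤ ‖y - y'‖ := by
  rw [← neg_sub p p', inner_neg_right] at h
  have key : ‖p - p'‖ ^ 2 ≤ ‖y - y'‖ * ‖p - p'‖ := by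
    refine le_trans ?_ (real_inner_le_norm (y - y') (p - p'))
    rw [show y - y' = (p - p') + (y - p) - (y' - p') by abel, inner_sub_left, inner_add_left,
      real_inner_self_eq_norm_sq]
    linarith
  rcases (norm_nonneg (p - p')).eq_or_lt with h0 | h0
  · exact h0 ▸ norm_nonneg _
  · nlinarith

lemma Convex.exists_lipschitz_metricProjection [CompleteSpace E] {Q : Set E} (hQ : Convex ℝ Q)
    (hQc : IsClosed Q) (hQne : Q.Nonempty) :
    ∃ P : E → E, LipschitzWith 1 P ∧ ∀ y, P y ∈ Q ∧ ∀ w ∈ Q, ⟪y - P y, w - P y⟫ ≤ 0 := by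
  have key : ∀ y, ∃ p ∈ Q, ∀ w ∈ Q, ⟪y - p, w - p⟫ ≤ 0 := fun y => by
    obtain ⟨p, hp, hmin⟩ := exists_norm_eq_iInf_of_complete_convex hQne hQc.isComplete hQ y
    exact ⟨p, hp, (norm_eq_iInf_iff_real_inner_le_zero hQ hp).1 hmin⟩
  choose P hPQ hP using key
  refine ⟨P, LipschitzWith.of_dist_le_mul fun y y' => ?_, fun y => ⟨hPQ y, hP y⟩⟩
  simpa [dist_eq_norm] using
    norm_sub_le_of_inner_sub_nonpos (hP y _ (hPQ y')) (hP y' _ (hPQ y))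

lemma IsCompact.exists_add_smul_mem_frontier [FiniteDimensional ℝ E] {K : Set E}
    (hK : IsCompact K) {p u : E} (hp : p ∈ K) (hu : u ≠ 0) :
    ∃ t : ℝ, 0 ≤ t ∧ p + t • u ∈ frontier K := by
  set f : ℝ → E := fun t => p + t • u
  have hT : IsCompact (Ici 0 ∩ f ⁻¹' K) :=
    (((Homeomorph.addLeft p).isClosedEmbedding.comp
      (isClosedEmbedding_smul_left hu)).isCompact_preimage hK).inter_left isClosed_Ici
  obtain ⟨t, ⟨ht0, htK⟩, hmax⟩ := hT.exists_isGreatest ⟨0, self_mem_Ici, by simpa [f] using hp⟩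
  refine ⟨t, ht0, subset_closure htK, fun hint => ?_⟩
  have hnhds : ∀ᶠ s in nhds t, f s ∈ interior K :=
    (show Continuous f by fun_prop).continuousAt.preimage_mem_nhds
      (isOpen_interior.mem_nhds hint)
  obtain ⟨t', htt', ht'⟩ := hnhds.exists_gt
  exact (hmax ⟨ht0.trans htt'.le, (interior_subset ht' : f t' ∈ K)⟩).not_gt htt'

lemma ball_subset_interior_of_le_infDist_frontier {Q : Set E} {x : E} {ε : ℝ} (hε : 0 < ε)
    (hx : x ∈ Q) (hxε : ε ≤ infDist x (frontier Q)) : ball x ε ⊆ interior Q := by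
  have hfar : ∀ z ∈ ball x ε, z ∉ frontier Q := fun z hz hzQ => by
    have := infDist_le_dist_of_mem (x := x) hzQ
    rw [mem_ball, dist_comm] at hz
    linarith
  refine (convex_ball x ε).isPreconnected.subset_of_closure_inter_subset isOpen_interior
    ⟨x, mem_ball_self hε, ?_⟩ fun z ⟨hz, hzb⟩ => ?_
  · by_contra h
    exact hfar x (mem_ball_self hε) ⟨subset_closure hx, h⟩
  · by_contra h
    exact hfar z hzb ⟨closure_mono interior_subset hz, h⟩

section Hyperplane

variable (n : ℕ) [Fact (finrank ℝ E = n + 1)] {ν : E}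

/-- Orthogonal projection onto the hyperplane through `x` orthogonal to `ν`, read in an
orthonormal basis of `νᗮ`; `hyperplanePoint` is its inverse on that hyperplane. -/
noncomputable def hyperplaneCoord (hν : ν ≠ 0) (x z : E) : EuclideanSpace ℝ (Fin n) :=
  (OrthonormalBasis.fromOrthogonalSpanSingleton n hν).repr
    ((ℝ ∙ ν)ᗮ.orthogonalProjectionOnto (z - x))

noncomputable def hyperplanePoint (hν : ν ≠ 0) (x : E) (w : EuclideanSpace ℝ (Fin n)) : E :=
  x + ((OrthonormalBasis.fromOrthogonalSpanSingleton n hν).repr.symm w : E)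

lemma lipschitzWith_hyperplaneCoord (hν : ν ≠ 0) (x : E) :
    LipschitzWith 1 (hyperplaneCoord n hν x) := by
  have h := ((OrthonormalBasis.fromOrthogonalSpanSingleton n hν).repr.lipschitz.comp
    (ℝ ∙ ν)ᗮ.lipschitzWith_orthogonalProjectionOnto).comp
    (IsometryEquiv.subRight x).isometry.lipschitz
  rw [mul_one, mul_one] at h
  exact h

lemma isometry_hyperplanePoint (hν : ν ≠ 0) (x : E) : Isometry (hyperplanePoint n hν x) :=
  (IsometryEquiv.addLeft x).isometry.comp ((ℝ ∙ ν)ᗮ.subtypeₗᵢ.isometry.comp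
    (OrthonormalBasis.fromOrthogonalSpanSingleton n hν).repr.symm.isometry)

lemma hyperplaneCoord_hyperplanePoint_add_smul (hν : ν ≠ 0) (x : E)
    (w : EuclideanSpace ℝ (Fin n)) (t : ℝ) :
    hyperplaneCoord n hν x (hyperplanePoint n hν x w + t • ν) = w := by
  simp [hyperplaneCoord, hyperplanePoint,
    Submodule.orthogonalProjectionOnto_orthogonalComplement_singleton_eq_zero]

lemma inner_hyperplanePoint_sub (hν : ν ≠ 0) (x : E) (w : EuclideanSpace ℝ (Fin n)) :
    ⟪ν, hyperplanePoint n hν x w - x⟫ = 0 := by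
  rw [hyperplanePoint, add_sub_cancel_left]
  exact Submodule.mem_orthogonal_singleton_iff_inner_right.1 (Subtype.prop _)

lemma hyperplanePoint_hyperplaneCoord (hν : ν ≠ 0) (x : E) {y : E} (hy : ⟪ν, y - x⟫ = 0) :
    hyperplanePoint n hν x (hyperplaneCoord n hν x y) = y := by
  have hk : y - x ∈ (ℝ ∙ ν)ᗮ := Submodule.mem_orthogonal_singleton_iff_inner_right.2 hy
  simp [hyperplanePoint, hyperplaneCoord,
    Submodule.orthogonalProjectionOnto_mem_subspace_eq_self ⟨y - x, hk⟩]

variable [MeasurableSpace E] [BorelSpace E]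

lemma hausdorffMeasure_lt_top_of_subset_hyperplane (hν : ν ≠ 0) {s : Set E}
    (hs : Bornology.IsBounded s) {c : ℝ} (hsν : ∀ y ∈ s, ⟪ν, y⟫ = c) : μH[n] s < ⊤ := by
  rcases s.eq_empty_or_nonempty with rfl | ⟨x, hx⟩
  · simp
  have hsub : s ⊆ hyperplanePoint n hν x '' (hyperplaneCoord n hν x '' s) := fun y hy =>
    ⟨_, mem_image_of_mem _ hy, hyperplanePoint_hyperplaneCoord n hν x (by
      rw [inner_sub_right, hsν y hy, hsν x hx, sub_self])⟩
  calc μH[n] s ≤ μH[n] (hyperplanePoint n hν x '' (hyperplaneCoord n hν x '' s)) :=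
        measure_mono hsub
    _ = μH[n] (hyperplaneCoord n hν x '' s) :=
        (isometry_hyperplanePoint n hν x).hausdorffMeasure_image (Or.inl (Nat.cast_nonneg n)) _
    _ < ⊤ := ((lipschitzWith_hyperplaneCoord n hν x).isBounded_image hs).measure_lt_top

lemma hausdorffMeasure_ball_le_frontier_inter_halfspace (hν : ν ≠ 0) {x : E} {Q : Set E}
    (hQ : IsCompact Q) {ε : ℝ} (hball : ball x ε ⊆ Q) :
    μH[n] (ball (0 : EuclideanSpace ℝ (Fin n)) ε) ≤
      μH[n] (frontier Q ∩ {z | 0 ≤ ⟪ν, z - x⟫}) := by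
  have : FiniteDimensional ℝ E := .of_fact_finrank_eq_succ n
  have hsub : ball 0 ε ⊆ hyperplaneCoord n hν x '' (frontier Q ∩ {z | 0 ≤ ⟪ν, z - x⟫}) := by
    intro w hw
    have hp : hyperplanePoint n hν x w ∈ Q := by
      apply hball
      have h := (isometry_hyperplanePoint n hν x).dist_eq w 0
      rw [show hyperplanePoint n hν x 0 = x by simp [hyperplanePoint]] at h
      rwa [mem_ball, h, ← mem_ball]
    obtain ⟨t, ht, hfr⟩ := hQ.exists_add_smul_mem_frontier hp hν
    refine ⟨_, ⟨hfr, ?_⟩, hyperplaneCoord_hyperplanePoint_add_smul n hν x w t⟩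
    show 0 ≤ ⟪ν, hyperplanePoint n hν x w + t • ν - x⟫
    rw [add_sub_right_comm, inner_add_right, inner_hyperplanePoint_sub, inner_smul_right,
      real_inner_self_eq_norm_sq, zero_add]
    positivity
  calc μH[n] (ball 0 ε)
      ≤ μH[n] (hyperplaneCoord n hν x '' (frontier Q ∩ {z | 0 ≤ ⟪ν, z - x⟫})) :=
        measure_mono hsub
    _ ≤ μH[n] (frontier Q ∩ {z | 0 ≤ ⟪ν, z - x⟫}) := by
        simpa using (lipschitzWith_hyperplaneCoord n hν x).hausdorffMeasure_image_le
          (Nat.cast_nonneg n) _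

lemma ConvexOn.apply_mul_le_setIntegral_frontier {Q : Set E} (hQc : IsCompact Q)
    (hfin : μH[n] (frontier Q) ≠ ⊤) {v : E → ℝ} (hv : ConvexOn ℝ Q v) (hvc : ContinuousOn v Q)
    (hv0 : ∀ z ∈ Q, 0 ≤ v z) {x : E} (hx : x ∈ Q) {ε : ℝ} (hball : ball x ε ⊆ Q)
    (hd : DifferentiableAt ℝ v x) :
    v x * (μH[n] (ball (0 : EuclideanSpace ℝ (Fin n)) ε)).toReal ≤
      ∫ z in frontier Q, v z ∂μH[n] := by
  have : FiniteDimensional ℝ E := .of_fact_finrank_eq_succ n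
  have : Nontrivial E := Module.nontrivial_of_finrank_eq_succ (Fact.out (p := finrank ℝ E = n + 1))
  obtain ⟨ν, hν, hνv⟩ := hv.exists_ne_zero_le_of_inner_nonneg hx hd
  have hfrQ : frontier Q ⊆ Q := hQc.isClosed.frontier_subset
  set S := frontier Q ∩ {z | 0 ≤ ⟪ν, z - x⟫}
  have hSmeas : MeasurableSet S := isClosed_frontier.measurableSet.inter
    (isClosed_le continuous_const (by fun_prop)).measurableSet
  have hSfin : μH[n] S ≠ ⊤ := measure_ne_top_of_subset inter_subset_left hfin
  calc v x * (μH[n] (ball (0 : EuclideanSpace ℝ (Fin n)) ε)).toReal ≤ v x * μH[n].real S :=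
        mul_le_mul_of_nonneg_left (ENNReal.toReal_mono hSfin
          (hausdorffMeasure_ball_le_frontier_inter_halfspace n hν hQc hball)) (hv0 x hx)
    _ ≤ ∫ z in frontier Q, v z ∂μH[n] :=
        (hQc.of_isClosed_subset isClosed_frontier hfrQ).mul_measureReal_le_setIntegral hfin
          (hvc.mono hfrQ) (fun z hz => hv0 z (hfrQ hz)) hSmeas inter_subset_left
          fun z hz => hνv z (hfrQ hz.1) hz.2

end Hyperplane

end InnerProductSpace

section Cube

def euclideanCube (ι : Type*) (a : ℝ) : Set (EuclideanSpace ℝ ι) := {y | ∀ i, |y i| ≤ a}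

variable {ι : Type*}

lemma isCompact_euclideanCube (a : ℝ) : IsCompact (euclideanCube ι a) := by
  have : euclideanCube ι a = EuclideanSpace.equiv ι ℝ ⁻¹' univ.pi fun _ => Icc (-a) a := by
    ext y
    simp [euclideanCube, abs_le, Pi.le_def, forall_and]
  rw [this]
  exact (EuclideanSpace.equiv ι ℝ).toHomeomorph.isCompact_preimage.2
    (isCompact_univ_pi fun _ => isCompact_Icc)

lemma frontier_euclideanCube_subset [Finite ι] (a : ℝ) :
    frontier (euclideanCube ι a) ⊆
      ⋃ i, ({y | y i = a} ∩ euclideanCube ι a) ∪ ({y | y i = -a} ∩ euclideanCube ι a) := by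
  intro y hy
  have hyC : y ∈ euclideanCube ι a := (isCompact_euclideanCube a).isClosed.frontier_subset hy
  by_contra h
  simp only [mem_iUnion, mem_union, mem_inter_iff, mem_ofPred_eq, not_exists, not_or] at h
  have hlt : ∀ i, |y i| < a := fun i => (hyC i).lt_of_ne fun he => by
    rcases abs_eq ((abs_nonneg _).trans (hyC i)) |>.1 he with h' | h'
    exacts [(h i).1 ⟨h', hyC⟩, (h i).2 ⟨h', hyC⟩]
  have hopen : IsOpen {z : EuclideanSpace ℝ ι | ∀ i, |z i| < a} := by
    simp only [ofPred_forall]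
    exact isOpen_iInter_of_finite fun i => isOpen_lt (by fun_prop) continuous_const
  exact hy.2 (interior_maximal (fun z hz i => (hz i).le) hopen hlt)

lemma hausdorffMeasure_frontier_euclideanCube_lt_top (n : ℕ) (a : ℝ) :
    μH[n] (frontier (euclideanCube (Fin (n + 1)) a)) < ⊤ := by
  have : Fact (finrank ℝ (EuclideanSpace ℝ (Fin (n + 1))) = n + 1) := ⟨finrank_euclideanSpace_fin⟩
  have hface : ∀ i c, μH[n] ({y | y i = c} ∩ euclideanCube (Fin (n + 1)) a) < ⊤ := fun i c =>
    hausdorffMeasure_lt_top_of_subset_hyperplane n (ν := EuclideanSpace.single i 1) (by simp)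
      ((isCompact_euclideanCube a).isBounded.subset inter_subset_right)
      (fun y hy => by simpa [EuclideanSpace.inner_single_left] using hy.1)
  exact (measure_mono (frontier_euclideanCube_subset a)).trans_lt
    ((measure_iUnion_fintype_le _ _).trans_lt
      (ENNReal.sum_lt_top.2 fun i _ => measure_union_lt_top (hface i a) (hface i (-a))))

end Cube

lemma Convex.hausdorffMeasure_frontier_lt_top {n : ℕ} {Q : Set (EuclideanSpace ℝ (Fin (n + 1)))}
    (hQc : IsCompact Q) (hQ : Convex ℝ Q) (hQint : (interior Q).Nonempty) :
    μH[n] (frontier Q) < ⊤ := by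
  obtain ⟨a, ha⟩ : ∃ a, Q ⊆ euclideanCube (Fin (n + 1)) a := by
    obtain ⟨R, hR⟩ := hQc.isBounded.subset_closedBall 0
    exact ⟨R, fun y hy i => (PiLp.norm_apply_le y i).trans (mem_closedBall_zero_iff.1 (hR hy))⟩
  obtain ⟨P, hPlip, hP⟩ :=
    hQ.exists_lipschitz_metricProjection hQc.isClosed (hQint.mono interior_subset)
  have hsub : frontier Q ⊆ P '' frontier (euclideanCube (Fin (n + 1)) a) := by
    intro q hq
    have hqQ : q ∈ Q := hQc.isClosed.frontier_subset hq
    obtain ⟨ν, hν, hνQ⟩ := hQ.exists_ne_zero_inner_sub_nonpos hQint hq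
    obtain ⟨t, ht, hfr⟩ := (isCompact_euclideanCube a).exists_add_smul_mem_frontier (ha hqQ) hν
    refine ⟨_, hfr, ?_⟩
    have hnormal : ⟪q + t • ν - q, P (q + t • ν) - q⟫ ≤ 0 := by
      rw [add_sub_cancel_left, inner_smul_left]
      exact mul_nonpos_of_nonneg_of_nonpos ht (hνQ _ (hP _).1)
    simpa [sub_eq_zero] using norm_sub_le_of_inner_sub_nonpos ((hP _).2 q hqQ) hnormal
  calc μH[n] (frontier Q) ≤ μH[n] (P '' frontier (euclideanCube (Fin (n + 1)) a)) :=
        measure_mono hsub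
    _ ≤ μH[n] (frontier (euclideanCube (Fin (n + 1)) a)) := by
        simpa using hPlip.hausdorffMeasure_image_le (Nat.cast_nonneg n) _
    _ < ⊤ := hausdorffMeasure_frontier_euclideanCube_lt_top n a

theorem stmt6_general (m : ℕ) (Q : Set (EuclideanSpace ℝ (Fin m)))
    (hQc : IsCompact Q) (hQconv : Convex ℝ Q)
    (x₀ : EuclideanSpace ℝ (Fin m)) (C₁ : ℝ) :
    ∀ ε > (0:ℝ), ∃ C : ℝ,
      ∀ v : EuclideanSpace ℝ (Fin m) → ℝ,
        ContinuousOn v Q →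
        ConvexOn ℝ Q v →
        DifferentiableOn ℝ v (interior Q) →
        (∀ x ∈ Q, 0 ≤ v x) →
        v x₀ = 0 →
        (∫ x, v x ∂((μH[(m : ℝ) - 1]).restrict (frontier Q))) ≤ C₁ →
        ∀ x ∈ Q, ε ≤ infDist x (frontier Q) → v x ≤ C := by
  intro ε hε
  obtain _ | n := m
  · refine ⟨0, fun v _ _ _ _ _ _ x _ hxε => ?_⟩
    rw [(isClopen_discrete Q).frontier_eq, infDist_empty] at hxε
    linarith
  have : Fact (finrank ℝ (EuclideanSpace ℝ (Fin (n + 1))) = n + 1) := ⟨finrank_euclideanSpace_fin⟩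
  set c := μH[n] (ball (0 : EuclideanSpace ℝ (Fin n)) ε)
  have hc : 0 < c.toReal := ENNReal.toReal_pos (measure_ball_pos _ _ hε).ne' measure_ball_lt_top.ne
  refine ⟨C₁ / c.toReal, fun v hvc hv hvd hv0 _ hC₁ x hxQ hxε => ?_⟩
  rw [show ((n + 1 : ℕ) : ℝ) - 1 = n by push_cast; ring] at hC₁
  have hball := ball_subset_interior_of_le_infDist_frontier hε hxQ hxε
  have hxint : x ∈ interior Q := hball (mem_ball_self hε)
  have hfin := hQconv.hausdorffMeasure_frontier_lt_top hQc ⟨x, hxint⟩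
  rw [le_div_iff₀ hc]
  exact (hv.apply_mul_le_setIntegral_frontier n hQc hfin.ne hvc hv0 hxQ
    (hball.trans interior_subset) (hvd.differentiableAt (isOpen_interior.mem_nhds hxint))).trans hC₁

/-- On a compact convex polytope `Q ⊂ ℝ^m` with nonempty interior, any
normalized nonnegative convex function `v` (continuous on `Q`, differentiable in the
interior, `v ≥ 0`, `v x₀ = 0`) with boundary integral `∫_{∂Q} v dσ ≤ C₁` is bounded on
`Q_ε` by a constant depending only on `ε`, `C₁` and `Q`. Here the boundary measure is the
`(m-1)`-dimensional Hausdorff measure restricted to `∂Q`. -/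
theorem stmt6 (m : ℕ) (Q : Set (EuclideanSpace ℝ (Fin m)))
    (hQc : IsCompact Q) (hQconv : Convex ℝ Q) (hQint : (interior Q).Nonempty)
    (x₀ : EuclideanSpace ℝ (Fin m)) (hx₀ : x₀ ∈ interior Q) (C₁ : ℝ) :
    ∀ ε > (0:ℝ), ∃ C : ℝ,
      ∀ v : EuclideanSpace ℝ (Fin m) → ℝ,
        ContinuousOn v Q →
        ConvexOn ℝ Q v →
        DifferentiableOn ℝ v (interior Q) →
        (∀ x ∈ Q, 0 ≤ v x) →
        v x₀ = 0 →
        (∫ x, v x ∂((μH[(m : ℝ) - 1]).restrict (frontier Q))) ≤ C₁ →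
        ∀ x ∈ Q, ε ≤ infDist x (frontier Q) → v x ≤ C :=
  stmt6_general m Q hQc hQconv x₀ C₁
end

section
/- Let P ⊂ ℝ^n be a compact convex polytope with nonempty interior and u : int P → ℝ a convex function with ∫_{P_ε} u² dμ ≤ C(ε) for every ε > 0, where P_ε is the set of points at distance ≥ ε from ∂P. Then for every p ∈ int P there is a constant C(p), depending only on C(·), P, and dist(p, ∂P), such that |u(p)| ≤ C(p). -/
open Set MeasureTheory Metric

/-! Since `|u| ≤ (1 + u²) / 2`, the `L²` bound on `P_{ε/2}` bounds `|∫_B u|` for every ball `B`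
inside `P_{ε/2}`. Averaging `u` over pairs of points symmetric about `y` gives the sub-mean-value
inequality `u y ≤ ⨍_{B(y,r)} u`, hence an upper bound for `u` on `B(p, 2r)`. Conversely every
`y ∈ B(p, r)` is the midpoint of `p` and `2y - p ∈ B(p, 2r)`, so
`u y ≤ (u p + sup_{B(p,2r)} u) / 2`, and integrating over `B(p, r)` bounds `u p` from below. -/

theorem abs_setIntegral_le_measureReal_add_setIntegral_sq {α : Type*} [MeasurableSpace α]
    {μ : Measure α} {f : α → ℝ} {s t : Set α} (hst : s ⊆ t) (ht : μ t ≠ ⊤) (hf : IntegrableOn f t μ)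
    (hf2 : IntegrableOn (fun x => f x ^ 2) t μ) :
    |∫ x in s, f x ∂μ| ≤ (μ.real t + ∫ x in t, f x ^ 2 ∂μ) / 2 := by
  have hone : IntegrableOn (fun _ => (1 : ℝ)) t μ := integrableOn_const ht
  have hsum : IntegrableOn (fun x => 1 + f x ^ 2) t μ := hone.add hf2
  calc |∫ x in s, f x ∂μ| ≤ ∫ x in s, |f x| ∂μ := abs_integral_le_integral_abs
    _ ≤ ∫ x in t, |f x| ∂μ :=
        setIntegral_mono_set hf.abs (.of_forall fun _ => abs_nonneg _) hst.eventuallyLE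
    _ ≤ ∫ x in t, (1 + f x ^ 2) / 2 ∂μ :=
        setIntegral_mono hf.abs (hsum.div_const 2) fun x => by
          nlinarith [sq_nonneg (|f x| - 1), sq_abs (f x)]
    _ = (μ.real t + ∫ x in t, f x ^ 2 ∂μ) / 2 := by
        rw [integral_div, integral_add hone hf2, setIntegral_const, smul_eq_mul, mul_one]

section MetricSpace

variable {X : Type*} [MetricSpace X] {s : Set X} {δ : ℝ}

theorem setOf_le_infDist_frontier_subset_interior (hδ : 0 < δ) :
    {y ∈ s | δ ≤ infDist y (frontier s)} ⊆ interior s := by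
  intro y ⟨hys, hyδ⟩
  by_contra hyi
  have hyf : y ∈ frontier s := ⟨subset_closure hys, hyi⟩
  rw [infDist_zero_of_mem hyf] at hyδ
  linarith

theorem IsCompact.setOf_le_infDist_frontier (hs : IsCompact s) :
    IsCompact {y ∈ s | δ ≤ infDist y (frontier s)} :=
  hs.inter_right (isClosed_le continuous_const (continuous_infDist_pt _))

end MetricSpace

section NormedSpace

variable {E : Type*} [NormedAddCommGroup E] [NormedSpace ℝ E] {s : Set E} {x : E}

theorem ball_infDist_frontier_subset_interior (hx : x ∈ interior s) :
    ball x (infDist x (frontier s)) ⊆ interior s := by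
  intro y hy
  refine (convex_ball _ _).isPreconnected.subset_of_closure_inter_subset isOpen_interior
    ⟨x, mem_ball_self (pos_of_mem_ball hy), hx⟩ ?_ hy
  rintro z ⟨hzcl, hzball⟩
  by_contra hzi
  have hzf : z ∈ frontier s := ⟨closure_mono interior_subset hzcl, hzi⟩
  exact disjoint_left.mp disjoint_ball_infDist hzball hzf

theorem closedBall_subset_setOf_le_infDist_frontier {ρ δ : ℝ} (hx : x ∈ interior s)
    (hρ : ρ < infDist x (frontier s)) (hρδ : ρ + δ ≤ infDist x (frontier s)) :
    closedBall x ρ ⊆ {y ∈ s | δ ≤ infDist y (frontier s)} := by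
  intro y hy
  have hxy : dist x y ≤ ρ := by rw [dist_comm]; exact hy
  refine ⟨interior_subset (ball_infDist_frontier_subset_interior hx ?_), ?_⟩
  · rw [mem_ball, dist_comm]; linarith
  · linarith [infDist_le_infDist_add_dist (s := frontier s) (x := x) (y := y)]

end NormedSpace

namespace ConvexOn

variable {E : Type*} [NormedAddCommGroup E] [NormedSpace ℝ E] [MeasurableSpace E] [BorelSpace E]
  {μ : Measure E} {s : Set E} {u : E → ℝ} {x : E} {r : ℝ}

theorem measureReal_closedBall_mul_le_setIntegral [μ.IsAddLeftInvariant] [μ.IsNegInvariant]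
    (hu : ConvexOn ℝ s u) (hs : closedBall x r ⊆ s) (hint : IntegrableOn u (closedBall x r) μ)
    (hfin : μ (closedBall x r) ≠ ⊤) :
    μ.real (closedBall x r) * u x ≤ ∫ y in closedBall x r, u y ∂μ := by
  set B := closedBall x r
  have hσ := Measure.measurePreserving_sub_left μ (x + x)
  have hσemb := measurableEmbedding_subLeft (x + x)
  have hσB : (fun y => x + x - y) ⁻¹' B = B := by
    ext y
    simp only [B, mem_preimage, mem_closedBall, dist_eq_norm,
      show x + x - y - x = -(y - x) by abel, norm_neg]
  have hint_refl : IntegrableOn (fun y => u (x + x - y)) B μ := by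
    simpa only [hσB, Function.comp_def] using (hσ.integrableOn_comp_preimage hσemb).mpr hint
  have hrefl : ∫ y in B, u (x + x - y) ∂μ = ∫ y in B, u y ∂μ := by
    conv_lhs => rw [← hσB]
    exact hσ.setIntegral_preimage_emb hσemb u B
  have hmid : ∀ y ∈ B, u x ≤ (u y + u (x + x - y)) / 2 := by
    intro y hy
    have hy' : x + x - y ∈ B := by rw [← hσB] at hy; exact hy
    have h := hu.2 (hs hy) (hs hy') (by norm_num : (0:ℝ) ≤ 1/2) (by norm_num : (0:ℝ) ≤ 1/2)
      (by norm_num)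
    rw [show (1/2 : ℝ) • y + (1/2 : ℝ) • (x + x - y) = x by module, smul_eq_mul,
      smul_eq_mul] at h
    linarith
  calc μ.real B * u x = ∫ _ in B, u x ∂μ := by rw [setIntegral_const, smul_eq_mul]
    _ ≤ ∫ y in B, (u y + u (x + x - y)) / 2 ∂μ :=
        setIntegral_mono_on (integrableOn_const hfin) ((hint.add hint_refl).div_const 2)
          isClosed_closedBall.measurableSet hmid
    _ = ∫ y in B, u y ∂μ := by rw [integral_div, integral_add hint hint_refl, hrefl]; ring

theorem setIntegral_closedBall_le (hu : ConvexOn ℝ s u) {K : ℝ} (hs : closedBall x (2 * r) ⊆ s)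
    (hK : ∀ y ∈ closedBall x (2 * r), u y ≤ K) (hint : IntegrableOn u (closedBall x r) μ)
    (hfin : μ (closedBall x r) ≠ ⊤) :
    ∫ y in closedBall x r, u y ∂μ ≤ μ.real (closedBall x r) * ((u x + K) / 2) := by
  have hmid : ∀ y ∈ closedBall x r, u y ≤ (u x + K) / 2 := by
    intro y hy
    have hy' : dist y x ≤ r := hy
    have hr : 0 ≤ r := dist_nonneg.trans hy'
    have hfar : y + y - x ∈ closedBall x (2 * r) := by
      rw [mem_closedBall, dist_eq_norm, show y + y - x - x = (2 : ℝ) • (y - x) by module,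
        norm_smul, Real.norm_two, ← dist_eq_norm]
      linarith
    have h := hu.2 (hs (mem_closedBall_self (by positivity))) (hs hfar)
      (by norm_num : (0:ℝ) ≤ 1/2) (by norm_num : (0:ℝ) ≤ 1/2) (by norm_num)
    rw [show (1/2 : ℝ) • x + (1/2 : ℝ) • (y + y - x) = y by module, smul_eq_mul,
      smul_eq_mul] at h
    linarith [hK _ hfar]
  calc ∫ y in closedBall x r, u y ∂μ ≤ ∫ _ in closedBall x r, (u x + K) / 2 ∂μ :=
        setIntegral_mono_on hint (integrableOn_const hfin) isClosed_closedBall.measurableSet hmid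
    _ = μ.real (closedBall x r) * ((u x + K) / 2) := by rw [setIntegral_const, smul_eq_mul]

theorem abs_le_of_abs_setIntegral_closedBall_le [ProperSpace E] [μ.IsAddHaarMeasure]
    [μ.IsNegInvariant] {M : ℝ} (hu : ConvexOn ℝ s u) (hr : 0 < r) (hs : closedBall x (3 * r) ⊆ s)
    (hint : IntegrableOn u (closedBall x (3 * r)) μ)
    (hM : ∀ t ⊆ closedBall x (3 * r), |∫ z in t, u z ∂μ| ≤ M) :
    |u x| ≤ 3 * M / μ.real (closedBall 0 r) := by
  set V := μ.real (closedBall (0 : E) r)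
  have hV : 0 < V := ENNReal.toReal_pos (measure_closedBall_pos μ 0 hr).ne'
    measure_closedBall_lt_top.ne
  have hvol : ∀ y, μ.real (closedBall y r) = V := fun y => by
    simp only [V, measureReal_def, Measure.addHaar_closedBall_center]
  have hsub : ∀ y ∈ closedBall x (2 * r), closedBall y r ⊆ closedBall x (3 * r) := fun y hy =>
    closedBall_subset_closedBall' (by linarith [mem_closedBall.mp hy])
  have hupper : ∀ y ∈ closedBall x (2 * r), u y ≤ M / V := by
    intro y hy
    have h := hu.measureReal_closedBall_mul_le_setIntegral ((hsub y hy).trans hs)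
      (hint.mono_set (hsub y hy)) measure_closedBall_lt_top.ne
    rw [hvol] at h
    rw [le_div_iff₀' hV]
    exact h.trans ((le_abs_self _).trans (hM _ (hsub y hy)))
  have hx : x ∈ closedBall x (2 * r) := mem_closedBall_self (by positivity)
  have hxr : closedBall x r ⊆ closedBall x (3 * r) := closedBall_subset_closedBall (by linarith)
  have hlower : -M ≤ V * ((u x + M / V) / 2) := by
    have h := hu.setIntegral_closedBall_le
      ((closedBall_subset_closedBall (by linarith)).trans hs) hupper (hint.mono_set hxr)
      measure_closedBall_lt_top.ne
    rw [hvol] at h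
    exact (neg_le_of_abs_le (hM _ hxr)).trans h
  have hM0 : 0 ≤ M := (abs_nonneg _).trans (hM _ hxr)
  have hVK : V * (M / V) = M := mul_div_cancel₀ M hV.ne'
  rw [mul_div_assoc, abs_le]
  constructor
  · refine le_of_mul_le_mul_left ?_ hV
    linarith
  · linarith [hupper x hx, div_nonneg hM0 hV.le]

end ConvexOn

theorem stmt14_general (n : ℕ) (P : Set (EuclideanSpace ℝ (Fin n)))
    (hPc : IsCompact P)
    (C : ℝ → ℝ) :
    ∀ ε > (0:ℝ), ∃ Cp : ℝ,
      ∀ u : EuclideanSpace ℝ (Fin n) → ℝ,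
        ConvexOn ℝ (interior P) u →
        ContinuousOn u (interior P) →
        (∀ δ > (0:ℝ),
          ∫ x in {x ∈ P | δ ≤ infDist x (frontier P)}, (u x) ^ 2 ≤ C δ) →
        ∀ p ∈ interior P, ε ≤ infDist p (frontier P) → |u p| ≤ Cp := by
  intro ε hε
  refine ⟨3 * ((volume.real P + C (ε / 2)) / 2) /
    volume.real (closedBall (0 : EuclideanSpace ℝ (Fin n)) (ε / 6)), ?_⟩
  intro u hconv hcont hL2 p hp hpε
  set Q := {x ∈ P | ε / 2 ≤ infDist x (frontier P)}
  have hQ : IsCompact Q := hPc.setOf_le_infDist_frontier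
  have hQP : Q ⊆ interior P := setOf_le_infDist_frontier_subset_interior (by linarith)
  have hball : closedBall p (3 * (ε / 6)) ⊆ Q :=
    closedBall_subset_setOf_le_infDist_frontier hp (by linarith) (by linarith)
  refine hconv.abs_le_of_abs_setIntegral_closedBall_le (by positivity) (hball.trans hQP)
    ((hcont.mono (hball.trans hQP)).integrableOn_compact (isCompact_closedBall _ _))
    fun t ht => ?_
  refine (abs_setIntegral_le_measureReal_add_setIntegral_sq (ht.trans hball)
    hQ.measure_lt_top.ne ((hcont.mono hQP).integrableOn_compact hQ)
    (((hcont.mono hQP).pow 2).integrableOn_compact hQ)).trans ?_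
  have hvol : volume.real Q ≤ volume.real P :=
    measureReal_mono (sep_subset _ _) hPc.measure_lt_top.ne
  linarith [hL2 (ε / 2) (by linarith)]

/-- Let `P ⊂ ℝ^n` be a compact convex polytope with nonempty interior and
`P_ε := {x ∈ P : dist(x, ∂P) ≥ ε}`. If a convex function `u` on the interior of `P`
satisfies `∫_{P_ε} u² ≤ C(ε)` for every `ε > 0`, then `u` is pointwise bounded in the
interior, with a bound depending only on `C(·)`, `P` and the distance to the boundary. -/
theorem stmt14 (n : ℕ) (P : Set (EuclideanSpace ℝ (Fin n)))
    (hPc : IsCompact P) (hPconv : Convex ℝ P) (hPint : (interior P).Nonempty)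
    (C : ℝ → ℝ) :
    ∀ ε > (0:ℝ), ∃ Cp : ℝ,
      ∀ u : EuclideanSpace ℝ (Fin n) → ℝ,
        ConvexOn ℝ (interior P) u →
        ContinuousOn u (interior P) →
        (∀ δ > (0:ℝ),
          ∫ x in {x ∈ P | δ ≤ infDist x (frontier P)}, (u x) ^ 2 ≤ C δ) →
        ∀ p ∈ interior P, ε ≤ infDist p (frontier P) → |u p| ≤ Cp :=
  stmt14_general n P hPc C
end
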